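/- arXiv:2406.13148 — 2 statements merged into one kernel-verified Lean document; each statement's English description precedes it below -/
import Mathlib

section
/- For any real-valued function c on ℝ and any λ ≥ 0, if s_i ≥ sup_{δ} (c(δ) - λ|δ - δ̂_i|) for each sample δ̂_i, i = 1,…,I, then for every probability measure Q on ℝ whose 1-Wasserstein distance to the empirical measure (1/I)∑_i Dirac(δ̂_i) is at most ε, the expectation E_Q[c] is at most λε + (1/I)∑_i s_i. -/
open MeasureTheory
open scoped ENNReal

/-- 1-Wasserstein distance defined via couplings (optimal transport with cost `edist`). -/
noncomputable def W1 {X : Type*} [MeasurableSpace X] [EMetricSpace X]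
    (P Q : Measure X) : ℝ≥0∞ :=
  ⨅ μ ∈ {μ : Measure (X × X) | μ.map Prod.fst = P ∧ μ.map Prod.snd = Q},
    ∫⁻ x, edist x.1 x.2 ∂μ

/-!
Let `f(x) = minᵢ (sᵢ + λ|x - δ̂ᵢ|)`. The dual constraints say exactly that
`c y ≤ f x + λ|x - y|` for all `x, y`, while `f δ̂ᵢ ≤ sᵢ`. Integrating this pointwise bound
against any coupling `μ` of the empirical measure `P̂` and `Q` gives
`E_Q[c] ≤ E_P̂[f] + λ ∫ |x - y| dμ ≤ (1/I) ∑ sᵢ + λ ∫ |x - y| dμ`,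
and taking the infimum over couplings bounds the last term by `λ W₁(P̂, Q) ≤ λ ε`.
-/

theorem ofReal_integral_le_lintegral_ofReal {α : Type*} [MeasurableSpace α] {μ : Measure α}
    {f : α → ℝ} (hf : Integrable f μ) :
    ENNReal.ofReal (∫ a, f a ∂μ) ≤ ∫⁻ a, ENNReal.ofReal (f a) ∂μ := by
  rw [integral_eq_lintegral_pos_part_sub_lintegral_neg_part hf]
  exact (ENNReal.ofReal_le_ofReal (sub_le_self _ ENNReal.toReal_nonneg)).trans
    ENNReal.ofReal_toReal_le

section EmpiricalMeasure

variable {ι X : Type*} [Fintype ι] [MeasurableSpace X] [MeasurableSingletonClass X]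

theorem integrable_smul_sum_dirac {a : ℝ≥0∞} (ha : a ≠ ∞) (x : ι → X) (f : X → ℝ) :
    Integrable f (a • ∑ i, Measure.dirac (x i)) :=
  (integrable_finsetSum_measure.mpr fun _ _ => integrable_dirac enorm_lt_top).smul_measure ha

theorem integral_smul_sum_dirac (a : ℝ≥0∞) (x : ι → X) (f : X → ℝ) :
    ∫ y, f y ∂(a • ∑ i, Measure.dirac (x i)) = a.toReal * ∑ i, f (x i) := by
  rw [integral_smul_measure, integral_finsetSum_measure
    fun _ _ => integrable_dirac enorm_lt_top, smul_eq_mul]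
  simp only [integral_dirac]

end EmpiricalMeasure

section LipschitzEnvelope

open Finset

variable {ι X : Type*} [Fintype ι] [Nonempty ι] [PseudoMetricSpace X]

/-- For `0 ≤ lam`, the largest `lam`-Lipschitz function that is at most `s i` at `x i`. -/
noncomputable def lipschitzEnvelope (lam : ℝ) (x : ι → X) (s : ι → ℝ) (y : X) : ℝ :=
  univ.inf' univ_nonempty fun i => s i + lam * dist y (x i)

theorem lipschitzEnvelope_apply_le (lam : ℝ) (x : ι → X) (s : ι → ℝ) (j : ι) :
    lipschitzEnvelope lam x s (x j) ≤ s j :=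
  calc lipschitzEnvelope lam x s (x j) ≤ s j + lam * dist (x j) (x j) := inf'_le _ (mem_univ j)
    _ = s j := by simp

theorem le_lipschitzEnvelope_add {lam : ℝ} (hlam : 0 ≤ lam) {x : ι → X} {s : ι → ℝ}
    {c : X → ℝ} (hs : ∀ i y, c y - lam * dist y (x i) ≤ s i) (z y : X) :
    c y ≤ lipschitzEnvelope lam x s z + lam * dist z y := by
  suffices c y - lam * dist z y ≤ lipschitzEnvelope lam x s z by linarith
  refine le_inf' _ _ fun i _ => ?_
  have := mul_le_mul_of_nonneg_left (dist_triangle_left y (x i) z) hlam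
  linarith [hs i y]

end LipschitzEnvelope

section Coupling

variable {X : Type*} [MeasurableSpace X] {P Q : Measure X} {f c : X → ℝ} {lam : ℝ}

/-- Comparing in `ℝ≥0∞` avoids any measurability assumption on `dist` over `X × X`. -/
theorem ofReal_integral_sub_le_mul_lintegral_edist [PseudoMetricSpace X]
    {μ : Measure (X × X)} (hP : μ.map Prod.fst = P) (hQ : μ.map Prod.snd = Q)
    (hf : Integrable f P) (hc : Integrable c Q) (hlam : 0 ≤ lam)
    (hcf : ∀ x y, c y ≤ f x + lam * dist x y) :
    ENNReal.ofReal (∫ y, c y ∂Q - ∫ x, f x ∂P) ≤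
      ENNReal.ofReal lam * ∫⁻ p, edist p.1 p.2 ∂μ := by
  subst hP hQ
  have hfμ : Integrable (fun p : X × X => f p.1) μ :=
    hf.comp_measurable measurable_fst
  have hcμ : Integrable (fun p : X × X => c p.2) μ :=
    hc.comp_measurable measurable_snd
  rw [integral_map measurable_snd.aemeasurable hc.aestronglyMeasurable,
    integral_map measurable_fst.aemeasurable hf.aestronglyMeasurable,
    ← integral_sub hcμ hfμ, ← lintegral_const_mul' _ _ ENNReal.ofReal_ne_top]
  refine (ofReal_integral_le_lintegral_ofReal (hcμ.sub hfμ)).trans (lintegral_mono fun p => ?_)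
  rw [edist_dist, ← ENNReal.ofReal_mul hlam]
  exact ENNReal.ofReal_le_ofReal (sub_le_iff_le_add'.mpr (hcf p.1 p.2))

theorem ofReal_integral_sub_le_mul_W1 [MetricSpace X] (hW : W1 P Q ≠ ∞)
    (hf : Integrable f P) (hc : Integrable c Q) (hlam : 0 ≤ lam)
    (hcf : ∀ x y, c y ≤ f x + lam * dist x y) :
    ENNReal.ofReal (∫ y, c y ∂Q - ∫ x, f x ∂P) ≤ ENNReal.ofReal lam * W1 P Q := by
  -- without a coupling, `lam = 0` would give `0 * ∞ = 0` on the right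
  obtain ⟨μ₀, hμ₀, -⟩ : ∃ μ ∈ {μ : Measure (X × X) | μ.map Prod.fst = P ∧ μ.map Prod.snd = Q},
      ∫⁻ p, edist p.1 p.2 ∂μ < ∞ := by
    simpa only [W1, iInf_lt_iff, exists_prop] using hW.lt_top
  have := Nonempty.intro
    (⟨μ₀, hμ₀⟩ : {μ // μ ∈ {μ : Measure (X × X) | μ.map Prod.fst = P ∧ μ.map Prod.snd = Q}})
  rw [W1, iInf_subtype', ENNReal.mul_iInf (by simp)]
  exact le_iInf fun μ => ofReal_integral_sub_le_mul_lintegral_edist μ.2.1 μ.2.2 hf hc hlam hcf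

end Coupling

theorem stmt1_general {I : ℕ} (hI : 0 < I) (c : ℝ → ℝ)
    (lam ε : ℝ) (hlam : 0 ≤ lam) (hε : 0 ≤ ε)
    (δhat : Fin I → ℝ) (s : Fin I → ℝ)
    (hs : ∀ i : Fin I, ∀ δ : ℝ, c δ - lam * |δ - δhat i| ≤ s i)
    (Q : Measure ℝ) (hcQ : Integrable c Q)
    (hW : W1 ((I : ℝ≥0∞)⁻¹ • ∑ i : Fin I, Measure.dirac (δhat i)) Q ≤ ENNReal.ofReal ε) :
    ∫ δ, c δ ∂Q ≤ lam * ε + (1 / (I : ℝ)) * ∑ i : Fin I, s i := by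
  have : Nonempty (Fin I) := ⟨⟨0, hI⟩⟩
  set P := (I : ℝ≥0∞)⁻¹ • ∑ i : Fin I, Measure.dirac (δhat i)
  set f := lipschitzEnvelope lam δhat s
  have hcf : ∀ x y, c y ≤ f x + lam * dist x y :=
    le_lipschitzEnvelope_add hlam fun i y => by simpa only [Real.dist_eq] using hs i y
  have hfP : ∫ x, f x ∂P ≤ 1 / I * ∑ i, s i := by
    rw [integral_smul_sum_dirac, ENNReal.toReal_inv, ENNReal.toReal_natCast, one_div]
    gcongr with i
    exact lipschitzEnvelope_apply_le lam δhat s i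
  have hgap : ∫ y, c y ∂Q - ∫ x, f x ∂P ≤ lam * ε := by
    rw [← ENNReal.ofReal_le_ofReal_iff (by positivity), ENNReal.ofReal_mul hlam]
    calc _ ≤ ENNReal.ofReal lam * W1 P Q :=
          ofReal_integral_sub_le_mul_W1 (ne_top_of_le_ne_top ENNReal.ofReal_ne_top hW)
            (integrable_smul_sum_dirac (by simp [hI.ne']) δhat f) hcQ hlam hcf
      _ ≤ _ := by gcongr
  linarith

/-- weak duality of Wasserstein DRO: if `s i ≥ sup_δ (c δ - λ|δ - δ̂ i|)` for
each sample, then for every probability measure `Q` within 1-Wasserstein distance `ε` of the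
empirical measure, `E_Q[c] ≤ λ ε + (1/I) ∑ i, s i`. -/
theorem stmt1 {I : ℕ} (hI : 0 < I) (c : ℝ → ℝ) (hc : Measurable c)
    (lam ε : ℝ) (hlam : 0 ≤ lam) (hε : 0 ≤ ε)
    (δhat : Fin I → ℝ) (s : Fin I → ℝ)
    (hs : ∀ i : Fin I, ∀ δ : ℝ, c δ - lam * |δ - δhat i| ≤ s i)
    (Q : Measure ℝ) [IsProbabilityMeasure Q] (hcQ : Integrable c Q)
    (hW : W1 ((I : ℝ≥0∞)⁻¹ • ∑ i : Fin I, Measure.dirac (δhat i)) Q ≤ ENNReal.ofReal ε) :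
    ∫ δ, c δ ∂Q ≤ lam * ε + (1 / (I : ℝ)) * ∑ i : Fin I, s i :=
  stmt1_general hI c lam ε hlam hε δhat s hs Q hcQ hW
end

section
/- For fixed α ∈ [0,1], q_c ∈ ℝ, S > 0, the function g(p) = ((1-α)·p)² + q_c² - S² is convex and nondecreasing in p on [0, ∞), so its supremum over a Wasserstein ball of distributions supported on [0, p̄] is attained by shifting probability mass toward p̄; in particular, for any distribution Q on [0, p̄] with W₁(P̂, Q) ≤ ε where P̂ = (1/I)∑_i Dirac(p̂_i), and any λ ≥ 0, E_Q[g] ≤ λε + (1/I)∑_i max( g(p̄) - λ(p̄ - p̂_i), g(p̂_i) ). -/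
/-!
Weak duality: if `f y ≤ λ d(x, y) + F x` on the common support of `P` and `Q`, integrating
against a coupling of `P` and `Q` gives `E_Q[f] ≤ λ · cost + E_P[F]`, and couplings of cost
arbitrarily close to `W₁(P, Q) ≤ ε` give `E_Q[f] ≤ λ ε + E_P[F]`. For `P = P̂` and
`F x = max (g p̄ - λ (p̄ - x)) (g x)` the pointwise bound holds on `[0, p̄]`: for `y ≤ x` by
monotonicity of `g`, and for `y ∈ [x, p̄]` because `y ↦ g y - λ (y - x)` is convex there, hence
bounded by its values at the endpoints `x` and `p̄`.
-/

open MeasureTheory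
open scoped ENNReal

open Set Filter Topology

theorem ConvexOn.sub_mul_abs_sub_le_max {g : ℝ → ℝ} {a b lam x y : ℝ}
    (hconv : ConvexOn ℝ (Icc a b) g) (hmono : MonotoneOn g (Icc a b)) (hlam : 0 ≤ lam)
    (hx : x ∈ Icc a b) (hy : y ∈ Icc a b) :
    g y - lam * |y - x| ≤ max (g b - lam * (b - x)) (g x) := by
  rcases le_or_gt y x with hyx | hxy
  · have : g y ≤ g x := hmono hy hx hyx
    exact le_max_of_le_right (by nlinarith [abs_nonneg (y - x)])
  rw [abs_of_pos (sub_pos.2 hxy)]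
  rcases hy.2.eq_or_lt with rfl | hyb
  · exact le_max_left _ _
  have hsecant := hconv.secant_mono_aux1 hx (right_mem_Icc.2 (hx.1.trans hx.2)) hxy hyb
  set M := max (g b - lam * (b - x)) (g x)
  refine le_of_mul_le_mul_left ?_ (sub_pos.2 (hxy.trans hyb))
  calc (b - x) * (g y - lam * (y - x))
      ≤ (b - y) * g x + (y - x) * (g b - lam * (b - x)) := by linear_combination hsecant
    _ ≤ (b - y) * M + (y - x) * M :=
        add_le_add (mul_le_mul_of_nonneg_left (le_max_right _ _) (by linarith))
          (mul_le_mul_of_nonneg_left (le_max_left _ _) (by linarith))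
    _ = (b - x) * M := by ring

section Transport

variable {X : Type*} [MetricSpace X] [MeasurableSpace X] [OpensMeasurableSpace X]
  [SecondCountableTopology X] {P Q : Measure X} {s : Set X} {f F : X → ℝ} {lam : ℝ}

theorem integral_le_of_coupling {μ : Measure (X × X)} (hμP : μ.map Prod.fst = P)
    (hμQ : μ.map Prod.snd = Q) {c : ℝ} (hc : 0 ≤ c)
    (hcost : ∫⁻ z, edist z.1 z.2 ∂μ ≤ ENNReal.ofReal c)
    (hP : ∀ᵐ x ∂P, x ∈ s) (hQ : ∀ᵐ y ∂Q, y ∈ s) (hf : Integrable f Q) (hF : Integrable F P)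
    (hlam : 0 ≤ lam) (hfF : ∀ x ∈ s, ∀ y ∈ s, f y ≤ lam * dist x y + F x) :
    ∫ y, f y ∂Q ≤ lam * c + ∫ x, F x ∂P := by
  have hdist_meas : AEStronglyMeasurable (fun z : X × X => dist z.1 z.2) μ :=
    continuous_dist.aestronglyMeasurable
  have hdist_lintegral : ∫⁻ z, ENNReal.ofReal (dist z.1 z.2) ∂μ ≤ ENNReal.ofReal c := by
    simpa only [edist_dist] using hcost
  have hdist_int : Integrable (fun z : X × X => dist z.1 z.2) μ :=
    ⟨hdist_meas, (hasFiniteIntegral_iff_ofReal (.of_forall fun _ => dist_nonneg)).2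
      (hdist_lintegral.trans_lt ENNReal.ofReal_lt_top)⟩
  have hdist_le : ∫ z, dist z.1 z.2 ∂μ ≤ c := by
    rw [integral_eq_lintegral_of_nonneg_ae (.of_forall fun _ => dist_nonneg) hdist_meas]
    exact ENNReal.toReal_le_of_le_ofReal hc hdist_lintegral
  subst hμP hμQ
  have hfμ : Integrable (fun z : X × X => f z.2) μ :=
    (integrable_map_measure hf.aestronglyMeasurable measurable_snd.aemeasurable).1 hf
  have hFμ : Integrable (fun z : X × X => F z.1) μ :=
    (integrable_map_measure hF.aestronglyMeasurable measurable_fst.aemeasurable).1 hF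
  rw [integral_map measurable_snd.aemeasurable hf.aestronglyMeasurable,
    integral_map measurable_fst.aemeasurable hF.aestronglyMeasurable]
  calc ∫ z, f z.2 ∂μ ≤ ∫ z, (lam * dist z.1 z.2 + F z.1) ∂μ := by
        refine integral_mono_ae hfμ ((hdist_int.const_mul lam).add hFμ) ?_
        filter_upwards [ae_of_ae_map measurable_fst.aemeasurable hP,
          ae_of_ae_map measurable_snd.aemeasurable hQ] with z hx hy
        exact hfF _ hx _ hy
    _ = lam * ∫ z, dist z.1 z.2 ∂μ + ∫ z, F z.1 ∂μ := by
        rw [integral_add (hdist_int.const_mul lam) hFμ, integral_const_mul]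
    _ ≤ lam * c + ∫ z, F z.1 ∂μ := by gcongr

theorem integral_le_of_W1_le {ε : ℝ} (hε : 0 ≤ ε) (hW : W1 P Q ≤ ENNReal.ofReal ε)
    (hP : ∀ᵐ x ∂P, x ∈ s) (hQ : ∀ᵐ y ∂Q, y ∈ s) (hf : Integrable f Q) (hF : Integrable F P)
    (hlam : 0 ≤ lam) (hfF : ∀ x ∈ s, ∀ y ∈ s, f y ≤ lam * dist x y + F x) :
    ∫ y, f y ∂Q ≤ lam * ε + ∫ x, F x ∂P := by
  have hcoupling : ∀ c > ε, ∫ y, f y ∂Q ≤ lam * c + ∫ x, F x ∂P := by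
    intro c hεc
    have hWc : W1 P Q < ENNReal.ofReal c :=
      hW.trans_lt ((ENNReal.ofReal_lt_ofReal_iff (hε.trans_lt hεc)).2 hεc)
    obtain ⟨μ, ⟨hμP, hμQ⟩, hcost⟩ :
        ∃ μ ∈ {μ : Measure (X × X) | μ.map Prod.fst = P ∧ μ.map Prod.snd = Q},
          ∫⁻ z, edist z.1 z.2 ∂μ < ENNReal.ofReal c := by
      simpa only [W1, iInf_lt_iff, exists_prop] using hWc
    exact integral_le_of_coupling hμP hμQ (hε.trans hεc.le) hcost.le hP hQ hf hF hlam hfF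
  have hlim : Tendsto (fun c => lam * c + ∫ x, F x ∂P) (𝓝[>] ε) (𝓝 (lam * ε + ∫ x, F x ∂P)) :=
    ((continuous_const.mul continuous_id).add continuous_const).continuousWithinAt.tendsto
  exact ge_of_tendsto hlim (eventually_nhdsWithin_of_forall hcoupling)

end Transport

noncomputable def empiricalMeasure {X : Type*} [MeasurableSpace X] {I : ℕ} (x : Fin I → X) :
    Measure X :=
  (I : ℝ≥0∞)⁻¹ • ∑ i, Measure.dirac (x i)

section Empirical

variable {X : Type*} [MeasurableSpace X] [MeasurableSingletonClass X] {I : ℕ} {x : Fin I → X}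

theorem ae_empiricalMeasure_mem {s : Set X} (hx : ∀ i, x i ∈ s) :
    ∀ᵐ y ∂empiricalMeasure x, y ∈ s := by
  rw [ae_iff]
  simp [empiricalMeasure, Measure.dirac_apply, hx]

theorem integrable_empiricalMeasure (hI : I ≠ 0) (f : X → ℝ) :
    Integrable f (empiricalMeasure x) :=
  (integrable_finsetSum_measure.2 fun _ _ => integrable_dirac enorm_lt_top).smul_measure
    (ENNReal.inv_ne_top.2 (Nat.cast_ne_zero.2 hI))

theorem integral_empiricalMeasure (f : X → ℝ) :
    ∫ y, f y ∂empiricalMeasure x = (1 / I) * ∑ i, f (x i) := by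
  rw [empiricalMeasure, integral_smul_measure,
    integral_finsetSum_measure fun _ _ => integrable_dirac enorm_lt_top]
  simp [integral_dirac]

end Empirical

theorem stmt7_general {I : ℕ} (hI : 0 < I) (α qc S pbar ε lam : ℝ)
    (hε : 0 ≤ ε) (hlam : 0 ≤ lam)
    (phat : Fin I → ℝ) (hphat : ∀ i, phat i ∈ Set.Icc 0 pbar)
    (g : ℝ → ℝ) (hg : g = fun p => ((1 - α) * p) ^ 2 + qc ^ 2 - S ^ 2) :
    ConvexOn ℝ Set.univ g ∧ MonotoneOn g (Set.Ici 0) ∧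
    (∀ (Q : Measure ℝ), IsProbabilityMeasure Q → Q (Set.Icc 0 pbar)ᶜ = 0 →
      Integrable g Q →
      W1 ((I : ℝ≥0∞)⁻¹ • ∑ i : Fin I, Measure.dirac (phat i)) Q ≤ ENNReal.ofReal ε →
      ∫ p, g p ∂Q ≤
        lam * ε + (1 / (I : ℝ)) * ∑ i : Fin I,
          max (g pbar - lam * (pbar - phat i)) (g (phat i))) := by
  have hconv : ConvexOn ℝ univ g := by
    simp only [hg, add_sub_assoc]
    exact ((even_two.convexOn_pow (𝕜 := ℝ)).comp_linearMap ((1 - α) • LinearMap.id)).add_const _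
  have hmono : MonotoneOn g (Ici 0) := by
    intro x (hx : 0 ≤ x) y _ hxy
    simp only [hg, mul_pow]
    gcongr
  refine ⟨hconv, hmono, fun Q _ hQ hgQ hW => ?_⟩
  have hpointwise : ∀ x ∈ Icc 0 pbar, ∀ y ∈ Icc 0 pbar,
      g y ≤ lam * dist x y + max (g pbar - lam * (pbar - x)) (g x) := by
    intro x hx y hy
    have := (hconv.subset (subset_univ _) (convex_Icc 0 pbar)).sub_mul_abs_sub_le_max
      (hmono.mono Icc_subset_Ici_self) hlam hx hy
    rw [Real.dist_eq, abs_sub_comm]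
    linarith
  calc ∫ p, g p ∂Q
      ≤ lam * ε + ∫ x, max (g pbar - lam * (pbar - x)) (g x) ∂empiricalMeasure phat :=
        integral_le_of_W1_le hε hW (ae_empiricalMeasure_mem hphat) (mem_ae_iff.2 hQ) hgQ
          (integrable_empiricalMeasure hI.ne' _) hlam hpointwise
    _ = _ := by rw [integral_empiricalMeasure]

/-- `g(p) = ((1-α)p)² + q_c² - S²` is convex and nondecreasing on `[0,∞)`;
consequently, for any distribution `Q` supported on `[0, p̄]` within 1-Wasserstein distance
`ε` of the empirical measure of samples `p̂_i ∈ [0, p̄]`, and any `λ ≥ 0`,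
`E_Q[g] ≤ λε + (1/I)∑ᵢ max( g(p̄) - λ(p̄ - p̂ᵢ), g(p̂ᵢ) )`. -/
theorem stmt7 {I : ℕ} (hI : 0 < I) (α qc S pbar ε lam : ℝ)
    (hα : α ∈ Set.Icc (0 : ℝ) 1) (hS : 0 < S) (hε : 0 ≤ ε) (hlam : 0 ≤ lam)
    (phat : Fin I → ℝ) (hphat : ∀ i, phat i ∈ Set.Icc 0 pbar)
    (g : ℝ → ℝ) (hg : g = fun p => ((1 - α) * p) ^ 2 + qc ^ 2 - S ^ 2) :
    ConvexOn ℝ Set.univ g ∧ MonotoneOn g (Set.Ici 0) ∧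
    (∀ (Q : Measure ℝ), IsProbabilityMeasure Q → Q (Set.Icc 0 pbar)ᶜ = 0 →
      Integrable g Q →
      W1 ((I : ℝ≥0∞)⁻¹ • ∑ i : Fin I, Measure.dirac (phat i)) Q ≤ ENNReal.ofReal ε →
      ∫ p, g p ∂Q ≤
        lam * ε + (1 / (I : ℝ)) * ∑ i : Fin I,
          max (g pbar - lam * (pbar - phat i)) (g (phat i))) :=
  stmt7_general hI α qc S pbar ε lam hε hlam phat hphat g hg
end
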